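/- arXiv:1402.5833 — 4 statements merged into one kernel-verified Lean document; each statement's English description precedes it below -/
import Mathlib

section
/- The image of SL(2,ℝ) under the homomorphism L equals the proper orthochronous Lorentz group SO₀(2,1). Concretely: for every g ∈ SL(2,ℝ), the linear map L(g) on ℝ³ satisfies η(L(g)u) = η(u) for all u, det L(g) = 1, and the (t,t) matrix entry of L(g) (the entry ⟨L(g)e₃, e₃⟩ in coordinates (x,y,t)) is positive; conversely, every 3×3 real matrix M with η(Mu) = η(u) for all u ∈ ℝ³, det M = 1, and M₃₃ > 0 equals L(g) for some g ∈ SL(2,ℝ). -/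
/-!
Under `φ`, `η` becomes the determinant and `L(g)` becomes the congruence `σ ↦ g⁻ᵀ σ g⁻¹`, so
`L(g)` preserves `η` when `det g = 1`, `det L(g) = (det g⁻¹)³`, and the `(t,t)` entry of `L(g)` is
half the squared Frobenius norm of `g⁻¹`. For surjectivity, a boost, lifted to `SL(2,ℝ)` as the
positive square root of `φ(M e₃)`, carries `e₃` to `M e₃`; the remaining factor fixes `e₃`, hence
is a rotation by some angle `θ`, the image of the rotation by `θ / 2`.
-/

open Matrix

noncomputable def phi (u : Fin 3 → ℝ) : Matrix (Fin 2) (Fin 2) ℝ :=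
  !![u 2 + u 0, u 1; u 1, u 2 - u 0]

noncomputable def phiInv (σ : Matrix (Fin 2) (Fin 2) ℝ) : Fin 3 → ℝ :=
  ![(σ 0 0 - σ 1 1) / 2, σ 0 1, (σ 0 0 + σ 1 1) / 2]

noncomputable def Lmap (g : Matrix (Fin 2) (Fin 2) ℝ) (u : Fin 3 → ℝ) : Fin 3 → ℝ :=
  phiInv ((g⁻¹)ᵀ * phi u * g⁻¹)

noncomputable def Lmat (g : Matrix (Fin 2) (Fin 2) ℝ) : Matrix (Fin 3) (Fin 3) ℝ :=
  Matrix.of fun i j => Lmap g (Pi.single j 1) i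

noncomputable def eta (u : Fin 3 → ℝ) : ℝ := (u 2) ^ 2 - (u 0) ^ 2 - (u 1) ^ 2

lemma det_inv_of_det_eq_one {n R : Type*} [Fintype n] [DecidableEq n] [CommRing R]
    {g : Matrix n n R} (hg : g.det = 1) : g⁻¹.det = 1 := by
  rw [det_nonsing_inv, hg, Ring.inverse_one]

lemma eta_eq_det_phi (u : Fin 3 → ℝ) : eta u = (phi u).det := by
  rw [eta, phi, det_fin_two_of]; ring

lemma phiInv_phi (u : Fin 3 → ℝ) : phiInv (phi u) = u := by
  ext i; fin_cases i <;> simp [phi, phiInv]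

lemma phi_phiInv {σ : Matrix (Fin 2) (Fin 2) ℝ} (hσ : σ.IsSymm) : phi (phiInv σ) = σ := by
  ext i j; fin_cases i <;> fin_cases j <;> simp [phi, phiInv] <;>
    first | ring | exact (hσ.apply 0 1).symm

lemma phi_single_two : phi (Pi.single 2 1) = 1 := by
  ext i j; fin_cases i <;> fin_cases j <;> simp [phi]

noncomputable def congrMat (h : Matrix (Fin 2) (Fin 2) ℝ) : Matrix (Fin 3) (Fin 3) ℝ :=
  Matrix.of fun i j => phiInv (hᵀ * phi (Pi.single j 1) * h) i

lemma Lmat_eq_congrMat_inv (g : Matrix (Fin 2) (Fin 2) ℝ) : Lmat g = congrMat g⁻¹ := rfl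

lemma congrMat_mulVec (h : Matrix (Fin 2) (Fin 2) ℝ) (u : Fin 3 → ℝ) :
    congrMat h *ᵥ u = phiInv (hᵀ * phi u * h) := by
  ext i; fin_cases i <;>
    simp [congrMat, phi, phiInv, mulVec, dotProduct, Fin.sum_univ_three, mul_apply,
      Fin.sum_univ_two, Pi.single_apply] <;> ring

lemma congrMat_one : congrMat 1 = 1 := by
  refine ext_iff_mulVec.2 fun u => ?_
  rw [congrMat_mulVec, transpose_one, one_mul, mul_one, phiInv_phi, one_mulVec]

lemma isSymm_transpose_mul_mul {σ : Matrix (Fin 2) (Fin 2) ℝ} (hσ : σ.IsSymm)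
    (h : Matrix (Fin 2) (Fin 2) ℝ) : (hᵀ * σ * h).IsSymm := by
  simp [IsSymm, transpose_mul, hσ.eq, mul_assoc]

lemma isSymm_phi (u : Fin 3 → ℝ) : (phi u).IsSymm := by
  ext i j; fin_cases i <;> fin_cases j <;> simp [phi]

lemma phi_congrMat_mulVec (h : Matrix (Fin 2) (Fin 2) ℝ) (u : Fin 3 → ℝ) :
    phi (congrMat h *ᵥ u) = hᵀ * phi u * h := by
  rw [congrMat_mulVec, phi_phiInv (isSymm_transpose_mul_mul (isSymm_phi u) h)]

lemma congrMat_mul (a b : Matrix (Fin 2) (Fin 2) ℝ) :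
    congrMat (a * b) = congrMat b * congrMat a := by
  refine ext_iff_mulVec.2 fun u => ?_
  rw [← mulVec_mulVec, congrMat_mulVec, congrMat_mulVec, phi_congrMat_mulVec]
  simp only [transpose_mul, mul_assoc]

lemma eta_congrMat_mulVec (h : Matrix (Fin 2) (Fin 2) ℝ) (u : Fin 3 → ℝ) :
    eta (congrMat h *ᵥ u) = h.det ^ 2 * eta u := by
  rw [eta_eq_det_phi, phi_congrMat_mulVec, det_mul, det_mul, det_transpose, eta_eq_det_phi]
  ring

def IsLorentz (M : Matrix (Fin 3) (Fin 3) ℝ) : Prop := ∀ u, eta (M *ᵥ u) = eta u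

lemma IsLorentz.mul {M N : Matrix (Fin 3) (Fin 3) ℝ} (hM : IsLorentz M) (hN : IsLorentz N) :
    IsLorentz (M * N) := fun u => by
  rw [← mulVec_mulVec, hM, hN]

lemma isLorentz_congrMat {h : Matrix (Fin 2) (Fin 2) ℝ} (hh : h.det ^ 2 = 1) :
    IsLorentz (congrMat h) := fun u => by
  rw [eta_congrMat_mulVec, hh, one_mul]

lemma det_congrMat (h : Matrix (Fin 2) (Fin 2) ℝ) : (congrMat h).det = h.det ^ 3 := by
  simp [det_fin_three, det_fin_two, congrMat, phi, phiInv, mul_apply, Fin.sum_univ_two,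
    Pi.single_apply]
  ring

lemma congrMat_two_two (h : Matrix (Fin 2) (Fin 2) ℝ) :
    congrMat h 2 2 = (h 0 0 ^ 2 + h 0 1 ^ 2 + h 1 0 ^ 2 + h 1 1 ^ 2) / 2 := by
  simp [congrMat, phi, phiInv, mul_apply, Fin.sum_univ_two, Pi.single_apply]
  ring

lemma congrMat_two_two_pos {h : Matrix (Fin 2) (Fin 2) ℝ} (hh : h.det ≠ 0) :
    0 < congrMat h 2 2 := by
  rw [congrMat_two_two]
  rw [det_fin_two] at hh
  have := abs_pos.2 hh
  cases abs_cases (h 0 0 * h 1 1 - h 0 1 * h 1 0) <;>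
    nlinarith [sq_nonneg (h 0 0 - h 1 1), sq_nonneg (h 0 1 + h 1 0),
      sq_nonneg (h 0 0 + h 1 1), sq_nonneg (h 0 1 - h 1 0)]

lemma exists_congrMat_mulVec_single_two {v : Fin 3 → ℝ} (hv : eta v = 1) (hv₂ : 0 < v 2) :
    ∃ h : Matrix (Fin 2) (Fin 2) ℝ, h.det = 1 ∧ congrMat h *ᵥ Pi.single 2 1 = v := by
  set k := √(2 * v 2 + 2)
  have hk : k ^ 2 = 2 * v 2 + 2 := Real.sq_sqrt (by linarith)
  have hk₀ : k ≠ 0 := (Real.sqrt_pos.2 (by linarith)).ne'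
  rw [eta] at hv
  -- By Cayley–Hamilton, `(φ v + 1)² = (tr φ v + 2) • φ v` since `det φ v = η v = 1`.
  refine ⟨k⁻¹ • (phi v + 1), ?_, ?_⟩
  · rw [det_fin_two]
    simp only [phi, Matrix.smul_apply, Matrix.add_apply, of_apply, cons_val', cons_val_zero,
      cons_val_one, cons_val_fin_one, one_apply_eq, one_apply_ne zero_ne_one,
      one_apply_ne one_ne_zero, smul_eq_mul, add_zero]
    field_simp
    linear_combination hv - hk
  · rw [congrMat_mulVec, phi_single_two]
    ext i; fin_cases i <;> simp [phiInv, phi, mul_apply, Fin.sum_univ_two] <;> field_simp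
    · linear_combination (-2 * v 0) * hk
    · linear_combination (-v 1) * hk
    · linear_combination (-2 * v 2) * hk - 2 * hv

noncomputable def spatialRotation (θ : ℝ) : Matrix (Fin 3) (Fin 3) ℝ :=
  !![Real.cos θ, -Real.sin θ, 0; Real.sin θ, Real.cos θ, 0; 0, 0, 1]

lemma congrMat_rotation (φ : ℝ) :
    congrMat !![Real.cos φ, Real.sin φ; -Real.sin φ, Real.cos φ] = spatialRotation (2 * φ) := by
  ext i j; fin_cases i <;> fin_cases j <;>
    simp [congrMat, spatialRotation, phi, phiInv, mul_apply, Fin.sum_univ_two, Pi.single_apply,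
      Real.cos_two_mul', Real.sin_two_mul] <;>
    first | linear_combination Real.cos_sq_add_sin_sq φ | ring

lemma exists_cos_sin_eq {c s : ℝ} (h : c ^ 2 + s ^ 2 = 1) :
    ∃ θ, Real.cos θ = c ∧ Real.sin θ = s := by
  have hz : ‖(⟨c, s⟩ : ℂ)‖ = 1 := by
    rw [Complex.norm_def, Complex.normSq_mk, ← sq, ← sq, h, Real.sqrt_one]
  refine ⟨Complex.arg ⟨c, s⟩, ?_, ?_⟩
  · rw [Complex.cos_arg (by rintro h; simp [h] at hz), hz, div_one]
  · rw [Complex.sin_arg, hz, div_one]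

lemma exists_eq_spatialRotation {N : Matrix (Fin 3) (Fin 3) ℝ} (hN : IsLorentz N)
    (hdet : N.det = 1) (hfix : N *ᵥ Pi.single 2 1 = Pi.single 2 1) :
    ∃ θ, N = spatialRotation θ := by
  have h02 : N 0 2 = 0 := by simpa using congrFun hfix 0
  have h12 : N 1 2 = 0 := by simpa using congrFun hfix 1
  have h22 : N 2 2 = 1 := by simpa using congrFun hfix 2
  have eta_at (x y z : ℝ) := hN ![x, y, z]
  simp only [eta, mulVec, dotProduct, Fin.sum_univ_three, cons_val_zero, cons_val_one, cons_val,
    h02, h12, h22, one_mul, zero_mul, add_zero] at eta_at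
  have e0 := eta_at 1 0 0
  have e1 := eta_at 0 1 0
  have e01 := eta_at 1 1 0
  have e02 := eta_at 1 0 1
  have e12 := eta_at 0 1 1
  norm_num at e0 e1 e01 e02 e12
  have h20 : N 2 0 = 0 := by linear_combination (e02 - e0) / 2
  have h21 : N 2 1 = 0 := by linear_combination (e12 - e1) / 2
  have hcol0 : N 0 0 ^ 2 + N 1 0 ^ 2 = 1 := by linear_combination -e0 + N 2 0 * h20
  have hcol1 : N 0 1 ^ 2 + N 1 1 ^ 2 = 1 := by linear_combination -e1 + N 2 1 * h21
  have horth : N 0 0 * N 0 1 + N 1 0 * N 1 1 = 0 := by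
    linear_combination (e0 + e1 - e01) / 2 + (N 2 1 * h20 + N 2 0 * h21) / 2
  have hdet2 : N 0 0 * N 1 1 - N 0 1 * N 1 0 = 1 := by
    rw [det_fin_three, h02, h12, h22, h20, h21] at hdet
    linear_combination hdet
  have h11 : N 1 1 = N 0 0 := by
    linear_combination -(N 1 1 * hcol0) + N 0 0 * hdet2 + N 1 0 * horth
  have h01 : N 0 1 = -N 1 0 := by
    linear_combination -(N 0 1 * hcol0) + N 0 0 * horth - N 1 0 * hdet2
  obtain ⟨θ, hcos, hsin⟩ := exists_cos_sin_eq hcol0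
  refine ⟨θ, ?_⟩
  ext i j; fin_cases i <;> fin_cases j <;> simp [spatialRotation, *]

lemma exists_congrMat_eq {M : Matrix (Fin 3) (Fin 3) ℝ} (hM : IsLorentz M) (hdet : M.det = 1)
    (h22 : 0 < M 2 2) : ∃ h : Matrix (Fin 2) (Fin 2) ℝ, h.det = 1 ∧ congrMat h = M := by
  obtain ⟨b, hb, hbM⟩ := exists_congrMat_mulVec_single_two (v := M *ᵥ Pi.single 2 1)
    (by rw [hM]; simp [eta]) (by simpa using h22)
  have hb_unit : IsUnit b.det := by rw [hb]; exact isUnit_one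
  have hb_inv := det_inv_of_det_eq_one hb
  set N := congrMat b⁻¹ * M
  have hN : IsLorentz N := (isLorentz_congrMat (by rw [hb_inv]; norm_num)).mul hM
  have hNdet : N.det = 1 := by rw [det_mul, det_congrMat, hb_inv, hdet]; norm_num
  have hNfix : N *ᵥ Pi.single 2 1 = Pi.single 2 1 := by
    rw [← mulVec_mulVec, ← hbM, mulVec_mulVec, ← congrMat_mul, mul_nonsing_inv _ hb_unit,
      congrMat_one, one_mulVec]
  obtain ⟨θ, hθ⟩ := exists_eq_spatialRotation hN hNdet hNfix
  refine ⟨!![Real.cos (θ / 2), Real.sin (θ / 2); -Real.sin (θ / 2), Real.cos (θ / 2)] * b, ?_, ?_⟩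
  · rw [det_mul, hb, det_fin_two_of]
    linear_combination Real.cos_sq_add_sin_sq (θ / 2)
  · rw [congrMat_mul, congrMat_rotation, mul_div_cancel₀ θ two_ne_zero, ← hθ, ← mul_assoc,
      ← congrMat_mul, nonsing_inv_mul _ hb_unit, congrMat_one, one_mul]

/-- the image of SL(2,ℝ) under L is exactly SO₀(2,1): for g ∈ SL(2,ℝ),
L(g) preserves η, has determinant 1 and positive (3,3) entry; conversely any such
matrix is L(g) for some g ∈ SL(2,ℝ). -/
theorem stmt5 :
    (∀ g : Matrix (Fin 2) (Fin 2) ℝ, g.det = 1 →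
      (∀ u : Fin 3 → ℝ, eta (Lmat g *ᵥ u) = eta u) ∧ (Lmat g).det = 1 ∧ 0 < Lmat g 2 2) ∧
    (∀ M : Matrix (Fin 3) (Fin 3) ℝ,
      (∀ u : Fin 3 → ℝ, eta (M *ᵥ u) = eta u) → M.det = 1 → 0 < M 2 2 →
      ∃ g : Matrix (Fin 2) (Fin 2) ℝ, g.det = 1 ∧ M = Lmat g) := by
  refine ⟨fun g hg => ?_, fun M hM hdet h22 => ?_⟩
  · have hg_inv := det_inv_of_det_eq_one hg
    rw [Lmat_eq_congrMat_inv]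
    exact ⟨isLorentz_congrMat (by rw [hg_inv]; norm_num), by rw [det_congrMat, hg_inv]; norm_num,
      congrMat_two_two_pos (by rw [hg_inv]; norm_num)⟩
  · obtain ⟨h, hh, rfl⟩ := exists_congrMat_eq hM hdet h22
    refine ⟨h⁻¹, det_inv_of_det_eq_one hh, ?_⟩
    rw [Lmat_eq_congrMat_inv, nonsing_inv_nonsing_inv _ (by rw [hh]; exact isUnit_one)]
end

section
/- Let σ₋₁ = [[0,1],[1,0]]. The set {h ∈ GL(2,ℝ) : ᵗh⁻¹ σ₋₁ h⁻¹ ∈ ℝ·σ₋₁} equals the union of the invertible diagonal matrices and the invertible antidiagonal matrices (matrices of the form [[0,b],[c,0]] with bc ≠ 0), and its identity component (the connected component containing I) is H(σ₋₁) = {diag(a, c) : a > 0, c > 0}. -/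
/-!
Conjugating by `h`, the condition `ᵗh⁻¹ σ h⁻¹ ∈ K σ` is equivalent to `ᵗh σ h ∈ K σ`, and for
`σ = [[0,1],[1,0]]` the matrix `ᵗg σ g` has diagonal entries `2 g₀₀ g₁₀` and `2 g₀₁ g₁₁`; for
invertible `g` their vanishing means that `g` is diagonal or antidiagonal.

The positive diagonal matrices form a convex set through `1`. Conversely,
`min (h₀₀ - |h₀₁|) (h₁₁ - |h₁₀|)` is continuous and nowhere zero on the invertible diagonal and
antidiagonal matrices, so it is positive on the whole component of `1`, which forces a matrix of
that component to be diagonal with positive entries.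
-/

open Matrix

section Field

variable {K : Type*} [Field K]

section Square

variable {n : Type*} [Fintype n] [DecidableEq n]

theorem inv_transpose_mul_mul_inv_eq_smul {g σ : Matrix n n K} {c : K} (hg : IsUnit g.det)
    (hc : gᵀ * σ * g = c • σ) :
    (gᵀ)⁻¹ * σ * g⁻¹ = c⁻¹ • σ := by
  have hgt : IsUnit gᵀ.det := by rwa [det_transpose]
  have hσ : c • ((gᵀ)⁻¹ * σ * g⁻¹) = σ := by
    rw [← Matrix.smul_mul, ← Matrix.mul_smul, ← hc, Matrix.mul_assoc gᵀ,
      nonsing_inv_mul_cancel_left _ _ hgt, mul_nonsing_inv_cancel_right _ _ hg]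
  -- for `c = 0` the hypothesis forces `σ = 0`, so the junk value `0⁻¹ = 0` is harmless
  rcases eq_or_ne c 0 with rfl | hc0
  · rw [zero_smul] at hσ
    simp [← hσ]
  · exact (eq_inv_smul_iff₀ hc0).mpr hσ

theorem exists_inv_transpose_mul_mul_inv_eq_smul_iff {h σ : Matrix n n K} (hh : IsUnit h.det) :
    (∃ c : K, (hᵀ)⁻¹ * σ * h⁻¹ = c • σ) ↔ ∃ c : K, hᵀ * σ * h = c • σ := by
  refine ⟨fun ⟨c, hc⟩ ↦ ⟨c⁻¹, ?_⟩,
    fun ⟨c, hc⟩ ↦ ⟨c⁻¹, inv_transpose_mul_mul_inv_eq_smul hh hc⟩⟩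
  have hinv : (h⁻¹ᵀ)⁻¹ = hᵀ := by
    rw [transpose_nonsing_inv, nonsing_inv_nonsing_inv _ (by rwa [det_transpose])]
  rw [← transpose_nonsing_inv] at hc
  simpa only [hinv, nonsing_inv_nonsing_inv _ hh] using
    inv_transpose_mul_mul_inv_eq_smul (isUnit_nonsing_inv_det _ hh) hc

def lineStabilizer (σ : Matrix n n K) : Set (Matrix n n K) :=
  {h | IsUnit h ∧ ∃ c : K, (hᵀ)⁻¹ * σ * h⁻¹ = c • σ}

end Square

variable (K) in
def monomialUnits : Set (Matrix (Fin 2) (Fin 2) K) :=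
  {h | IsUnit h ∧ ((h 0 1 = 0 ∧ h 1 0 = 0) ∨ (h 0 0 = 0 ∧ h 1 1 = 0))}

theorem transpose_mul_swap_mul (g : Matrix (Fin 2) (Fin 2) K) :
    gᵀ * !![0, 1; 1, 0] * g =
      !![2 * g 0 0 * g 1 0, g 0 0 * g 1 1 + g 1 0 * g 0 1;
        g 0 0 * g 1 1 + g 1 0 * g 0 1, 2 * g 0 1 * g 1 1] := by
  ext i j
  fin_cases i <;> fin_cases j <;> simp [mul_apply, Fin.sum_univ_two] <;> ring

theorem exists_transpose_mul_swap_mul_eq_smul_iff (h2 : (2 : K) ≠ 0)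
    (g : Matrix (Fin 2) (Fin 2) K) :
    (∃ c : K, gᵀ * !![0, 1; 1, 0] * g = c • !![0, 1; 1, 0]) ↔
      g 0 0 * g 1 0 = 0 ∧ g 0 1 * g 1 1 = 0 := by
  simp [transpose_mul_swap_mul, h2]

theorem col_mul_eq_zero_iff_diagonal_or_antidiagonal {g : Matrix (Fin 2) (Fin 2) K}
    (hg : g.det ≠ 0) :
    g 0 0 * g 1 0 = 0 ∧ g 0 1 * g 1 1 = 0 ↔
      (g 0 1 = 0 ∧ g 1 0 = 0) ∨ (g 0 0 = 0 ∧ g 1 1 = 0) := by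
  rw [det_fin_two] at hg
  constructor
  · rintro ⟨h₀, h₁⟩
    rcases mul_eq_zero.mp h₀ with h | h <;> rcases mul_eq_zero.mp h₁ with h' | h' <;> simp_all
  · rintro (⟨h, h'⟩ | ⟨h, h'⟩) <;> simp [h, h']

theorem lineStabilizer_swap (h2 : (2 : K) ≠ 0) :
    lineStabilizer !![(0 : K), 1; 1, 0] = monomialUnits K := by
  ext h
  simp only [lineStabilizer, monomialUnits, isUnit_iff_isUnit_det]
  refine and_congr_right fun hh ↦ ?_
  rw [exists_inv_transpose_mul_mul_inv_eq_smul_iff hh, exists_transpose_mul_swap_mul_eq_smul_iff h2,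
    col_mul_eq_zero_iff_diagonal_or_antidiagonal hh.ne_zero]

end Field

def posDiagonal : Set (Matrix (Fin 2) (Fin 2) ℝ) :=
  {h | 0 < h 0 0 ∧ 0 < h 1 1 ∧ h 0 1 = 0 ∧ h 1 0 = 0}

theorem one_mem_posDiagonal : (1 : Matrix (Fin 2) (Fin 2) ℝ) ∈ posDiagonal := by
  simp [posDiagonal]

theorem posDiagonal_subset_monomialUnits : posDiagonal ⊆ monomialUnits ℝ := by
  rintro h ⟨h₀₀, h₁₁, h₀₁, h₁₀⟩
  refine ⟨?_, .inl ⟨h₀₁, h₁₀⟩⟩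
  rw [isUnit_iff_isUnit_det, det_fin_two, h₀₁, h₁₀, mul_zero, sub_zero, isUnit_iff_ne_zero]
  exact (mul_pos h₀₀ h₁₁).ne'

theorem convex_posDiagonal : Convex ℝ posDiagonal := by
  have hlin (i j : Fin 2) := (entryLinearMap ℝ ℝ i j).isLinear
  exact (convex_halfSpace_gt (hlin 0 0) 0).inter <| (convex_halfSpace_gt (hlin 1 1) 0).inter <|
    (convex_hyperplane (hlin 0 1) 0).inter (convex_hyperplane (hlin 1 0) 0)

def diagonalDominance (h : Matrix (Fin 2) (Fin 2) ℝ) : ℝ :=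
  min (h 0 0 - |h 0 1|) (h 1 1 - |h 1 0|)

theorem continuous_diagonalDominance : Continuous diagonalDominance := by
  unfold diagonalDominance
  fun_prop

theorem diagonalDominance_ne_zero {h : Matrix (Fin 2) (Fin 2) ℝ} (hh : h ∈ monomialUnits ℝ) :
    diagonalDominance h ≠ 0 := by
  obtain ⟨hu, hpattern⟩ := hh
  have hdet := ((isUnit_iff_isUnit_det h).mp hu).ne_zero
  rw [det_fin_two] at hdet
  rcases hpattern with ⟨h₀₁, h₁₀⟩ | ⟨h₀₀, h₁₁⟩
  · obtain ⟨h₀₀, h₁₁⟩ : h 0 0 ≠ 0 ∧ h 1 1 ≠ 0 := by simpa [h₀₁, h₁₀] using hdet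
    rw [diagonalDominance, h₀₁, h₁₀, abs_zero, sub_zero, sub_zero]
    rcases min_choice (h 0 0) (h 1 1) with e | e <;> rw [e]
    exacts [h₀₀, h₁₁]
  · have h₀₁ : h 0 1 ≠ 0 := fun h₀₁ ↦ hdet (by simp [h₀₀, h₀₁])
    rw [diagonalDominance, h₀₀]
    exact ((min_le_left _ _).trans_lt (by simpa using h₀₁)).ne

theorem mem_posDiagonal_of_diagonalDominance_pos {h : Matrix (Fin 2) (Fin 2) ℝ}
    (hh : h ∈ monomialUnits ℝ) (hpos : 0 < diagonalDominance h) : h ∈ posDiagonal := by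
  rw [diagonalDominance, lt_min_iff] at hpos
  obtain ⟨-, ⟨h₀₁, h₁₀⟩ | ⟨h₀₀, h₁₁⟩⟩ := hh
  · simp_all [posDiagonal]
  · simp only [h₀₀, zero_sub, neg_pos] at hpos
    exact absurd hpos.1 (abs_nonneg _).not_gt

theorem connectedComponentIn_monomialUnits_one :
    connectedComponentIn (monomialUnits ℝ) 1 = posDiagonal := by
  refine subset_antisymm (fun h hh ↦ ?_) <|
    convex_posDiagonal.isPreconnected.subset_connectedComponentIn one_mem_posDiagonal
      posDiagonal_subset_monomialUnits
  have hsub := connectedComponentIn_subset (monomialUnits ℝ) 1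
  refine mem_posDiagonal_of_diagonalDominance_pos (hsub hh) ?_
  exact isPreconnected_connectedComponentIn.lt_of_ne continuous_diagonalDominance.continuousOn
    (fun g hg ↦ diagonalDominance_ne_zero (hsub hg))
    ⟨1, mem_connectedComponentIn (posDiagonal_subset_monomialUnits one_mem_posDiagonal), by
      simp [diagonalDominance]⟩ hh

/-- the set of h ∈ GL(2,ℝ) with ᵗh⁻¹σ₋₁h⁻¹ ∈ ℝ·σ₋₁ (σ₋₁ = [[0,1],[1,0]])
is the union of invertible diagonal and invertible antidiagonal matrices, whose identity
component is the positive diagonal group {diag(a,c) : a > 0, c > 0}. -/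
theorem stmt14 :
    ({h : Matrix (Fin 2) (Fin 2) ℝ | IsUnit h ∧
        ∃ c : ℝ, (hᵀ)⁻¹ * !![(0 : ℝ), 1; 1, 0] * h⁻¹ = c • !![(0 : ℝ), 1; 1, 0]} =
      {h : Matrix (Fin 2) (Fin 2) ℝ | IsUnit h ∧
        ((h 0 1 = 0 ∧ h 1 0 = 0) ∨ (h 0 0 = 0 ∧ h 1 1 = 0))}) ∧
    connectedComponentIn {h : Matrix (Fin 2) (Fin 2) ℝ | IsUnit h ∧
        ((h 0 1 = 0 ∧ h 1 0 = 0) ∨ (h 0 0 = 0 ∧ h 1 1 = 0))} 1 =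
      {h : Matrix (Fin 2) (Fin 2) ℝ | 0 < h 0 0 ∧ 0 < h 1 1 ∧ h 0 1 = 0 ∧ h 1 0 = 0} :=
  ⟨lineStabilizer_swap two_ne_zero, connectedComponentIn_monomialUnits_one⟩
end

section
/- Classification of lines in the conformal Lie algebra span{I, J} ⊆ M₂(ℝ), where J = [[0,−1],[1,0]]: for every one-dimensional subspace ℓ of span{I, J}, there exists a conformal matrix g ∈ GL(2,ℝ) (i.e., g ᵗg ∈ ℝ·I) such that g ℓ g⁻¹ is either ℝ·(I + αJ) for a unique α ≥ 0, or ℝ·J; moreover these representatives are pairwise inequivalent: no conformal g ∈ GL(2,ℝ) conjugates ℝ·(I+αJ) onto ℝ·(I+α′J) for α ≠ α′ with α, α′ ≥ 0, nor ℝ·(I+αJ) onto ℝ·J. -/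
open Matrix

noncomputable def Jm : Matrix (Fin 2) (Fin 2) ℝ := !![0, -1; 1, 0]

/-- g is conformal: invertible with g·ᵗg a scalar multiple of the identity. -/
def conformal (g : Matrix (Fin 2) (Fin 2) ℝ) : Prop :=
  IsUnit g ∧ ∃ c : ℝ, g * gᵀ = c • (1 : Matrix (Fin 2) (Fin 2) ℝ)

/-- The line ℝ·A in M₂(ℝ). -/
def line (A : Matrix (Fin 2) (Fin 2) ℝ) : Set (Matrix (Fin 2) (Fin 2) ℝ) :=
  {B | ∃ t : ℝ, B = t • A}

/-- Conjugation of a set of matrices by g. -/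
def mconj (g : Matrix (Fin 2) (Fin 2) ℝ) (S : Set (Matrix (Fin 2) (Fin 2) ℝ)) :
    Set (Matrix (Fin 2) (Fin 2) ℝ) :=
  (fun X => g * X * g⁻¹) '' S

/-!
A conformal `g` satisfies `gᵀ = c • g⁻¹` with `det g = ±c`, and every `2 × 2` matrix satisfies
`g * J * gᵀ = det g • J`. Hence conjugation by `g` fixes `I` and sends `J` to `±J`, so it maps
`ℝ·(I + αJ)` to `ℝ·(I ± αJ)`: the line `ℝ·J` and the value `|α|` are invariants. Conversely the
reflection `diag(1, -1)` is conformal and realizes the sign change.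
-/

local notation "M₂" => Matrix (Fin 2) (Fin 2) ℝ

lemma line_smul {c : ℝ} (hc : c ≠ 0) (A : M₂) : line (c • A) = line A := by
  ext X
  constructor
  · rintro ⟨t, rfl⟩
    exact ⟨t * c, by rw [smul_smul]⟩
  · rintro ⟨t, rfl⟩
    exact ⟨t / c, by rw [smul_smul, div_mul_cancel₀ _ hc]⟩

lemma mconj_line (g A : M₂) : mconj g (line A) = line (g * A * g⁻¹) := by
  ext X
  constructor
  · rintro ⟨_, ⟨t, rfl⟩, rfl⟩
    exact ⟨t, by simp only [Matrix.mul_smul, Matrix.smul_mul]⟩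
  · rintro ⟨t, rfl⟩
    exact ⟨t • A, ⟨t, rfl⟩, by simp only [Matrix.mul_smul, Matrix.smul_mul]⟩

lemma coe_span_singleton_eq_line (v : M₂) : ((ℝ ∙ v : Submodule ℝ M₂) : Set M₂) = line v := by
  ext X
  simp only [SetLike.mem_coe, Submodule.mem_span_singleton, line, Set.mem_ofPred_eq, eq_comm]

lemma exists_coe_eq_line_of_finrank_eq_one {ℓ : Submodule ℝ M₂} (hℓ : Module.finrank ℝ ℓ = 1) :
    ∃ v ∈ ℓ, v ≠ 0 ∧ (ℓ : Set M₂) = line v := by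
  obtain ⟨v, hvℓ, hv0⟩ := Submodule.exists_mem_ne_zero_of_ne_bot (p := ℓ) fun h => by
    rw [h, finrank_bot] at hℓ; exact zero_ne_one hℓ
  exact ⟨v, hvℓ, hv0, by
    rw [eq_span_singleton_of_mem_of_finrank_eq_one hℓ hvℓ hv0, coe_span_singleton_eq_line]⟩

lemma line_one_add_smul_Jm_injective : Function.Injective fun α : ℝ => line (1 + α • Jm) := by
  intro α β h
  replace h : line (1 + α • Jm) = line (1 + β • Jm) := h
  obtain ⟨t, ht⟩ : 1 + α • Jm ∈ line (1 + β • Jm) := h ▸ ⟨1, (one_smul ℝ _).symm⟩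
  have h00 : 1 = t := by simpa [Jm] using congrFun (congrFun ht 0) 0
  have h10 : α = t * β := by simpa [Jm] using congrFun (congrFun ht 1) 0
  rw [h10, ← h00, one_mul]

lemma line_one_add_smul_Jm_ne_line_Jm (α : ℝ) : line (1 + α • Jm) ≠ line Jm := by
  intro h
  obtain ⟨t, ht⟩ : 1 + α • Jm ∈ line Jm := h ▸ ⟨1, (one_smul ℝ _).symm⟩
  simpa [Jm] using congrFun (congrFun ht 0) 0

lemma mul_Jm_mul_transpose (g : M₂) : g * Jm * gᵀ = g.det • Jm := by
  ext i j
  fin_cases i <;> fin_cases j <;>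
    simp [Jm, Matrix.mul_apply, Matrix.det_fin_two, Fin.sum_univ_two] <;> ring

lemma conformal_one : conformal 1 := ⟨isUnit_one, 1, by simp⟩

lemma conformal.exists_conj_Jm {g : M₂} (hg : conformal g) :
    ∃ ε : ℝ, |ε| = 1 ∧ g * Jm * g⁻¹ = ε • Jm := by
  obtain ⟨hu, c, hc⟩ := hg
  have hdet : g.det ≠ 0 := ((isUnit_iff_isUnit_det g).mp hu).ne_zero
  have hdet_sq : g.det ^ 2 = c ^ 2 := by
    simpa [sq, Matrix.det_smul] using congrArg Matrix.det hc
  have hc0 : c ≠ 0 := by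
    rintro rfl
    exact hdet (pow_eq_zero_iff two_ne_zero |>.mp (by simpa using hdet_sq))
  have hinv : g⁻¹ = c⁻¹ • gᵀ := Matrix.inv_eq_right_inv <| by
    rw [Matrix.mul_smul, hc, smul_smul, inv_mul_cancel₀ hc0, one_smul]
  refine ⟨g.det / c, ?_, ?_⟩
  · rw [abs_div, (sq_eq_sq_iff_abs_eq_abs _ _).mp hdet_sq, div_self (abs_ne_zero.mpr hc0)]
  · rw [hinv, Matrix.mul_smul, mul_Jm_mul_transpose, smul_smul, inv_mul_eq_div]

lemma conj_one_add_smul_Jm {g : M₂} (hg : IsUnit g) {ε : ℝ} (h : g * Jm * g⁻¹ = ε • Jm)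
    (α : ℝ) : g * (1 + α • Jm) * g⁻¹ = 1 + (ε * α) • Jm := by
  rw [Matrix.mul_add, Matrix.add_mul, Matrix.mul_smul, Matrix.smul_mul, h, Matrix.mul_one,
    Matrix.mul_nonsing_inv _ ((isUnit_iff_isUnit_det g).mp hg), smul_smul, mul_comm]

lemma conformal.mconj_line_one_add_smul_Jm {g : M₂} (hg : conformal g) (α : ℝ) :
    ∃ ε : ℝ, |ε| = 1 ∧ mconj g (line (1 + α • Jm)) = line (1 + (ε * α) • Jm) := by
  obtain ⟨ε, hε, hgJ⟩ := hg.exists_conj_Jm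
  exact ⟨ε, hε, by rw [mconj_line, conj_one_add_smul_Jm hg.1 hgJ]⟩

lemma diag_one_mul_self {ε : ℝ} (hε : ε ^ 2 = 1) :
    (!![1, 0; 0, ε] : M₂) * !![1, 0; 0, ε] = 1 := by
  rw [Matrix.one_fin_two, Matrix.mul_fin_two]
  simp [← sq, hε]

lemma conformal_diag_one {ε : ℝ} (hε : ε ^ 2 = 1) : conformal !![1, 0; 0, ε] := by
  have hT : (!![1, 0; 0, ε] : M₂)ᵀ = !![1, 0; 0, ε] := by
    ext i j
    fin_cases i <;> fin_cases j <;> rfl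
  have hdet : IsUnit (!![1, 0; 0, ε] : M₂).det := isUnit_det_of_right_inverse (diag_one_mul_self hε)
  refine ⟨(isUnit_iff_isUnit_det _).mpr hdet, 1, ?_⟩
  rw [one_smul, hT, diag_one_mul_self hε]

lemma diag_one_conj_Jm {ε : ℝ} (hε : ε ^ 2 = 1) :
    (!![1, 0; 0, ε] : M₂) * Jm * (!![1, 0; 0, ε])⁻¹ = ε • Jm := by
  rw [Matrix.inv_eq_right_inv (diag_one_mul_self hε), Jm]
  ext i j
  fin_cases i <;> fin_cases j <;> simp

lemma exists_conformal_mconj_line_eq_abs (β : ℝ) :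
    ∃ g, conformal g ∧ mconj g (line (1 + β • Jm)) = line (1 + |β| • Jm) := by
  obtain ⟨ε, hε, hεβ⟩ : ∃ ε : ℝ, ε ^ 2 = 1 ∧ ε * β = |β| := by
    rcases le_or_gt 0 β with hβ | hβ
    · exact ⟨1, one_pow 2, by rw [one_mul, abs_of_nonneg hβ]⟩
    · exact ⟨-1, by norm_num, by rw [neg_one_mul, abs_of_neg hβ]⟩
  refine ⟨_, conformal_diag_one hε, ?_⟩
  rw [mconj_line, conj_one_add_smul_Jm (conformal_diag_one hε).1 (diag_one_conj_Jm hε), hεβ]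

lemma exists_conformal_mconj_line {v : M₂} (hv : v ∈ Submodule.span ℝ {1, Jm}) (hv0 : v ≠ 0) :
    ∃ g, conformal g ∧
      ((∃ α : ℝ, 0 ≤ α ∧ mconj g (line v) = line (1 + α • Jm)) ∨ mconj g (line v) = line Jm) := by
  obtain ⟨a, b, rfl⟩ := Submodule.mem_span_pair.mp hv
  by_cases ha : a = 0
  · subst ha
    have hb : b ≠ 0 := by rintro rfl; simp at hv0
    refine ⟨1, conformal_one, Or.inr ?_⟩
    rw [mconj_line, zero_smul, zero_add, Matrix.one_mul, inv_one, Matrix.mul_one, line_smul hb]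
  · have hline : line (a • 1 + b • Jm) = line (1 + (b / a) • Jm) := by
      rw [← line_smul ha (1 + _), smul_add, smul_smul, mul_div_cancel₀ _ ha]
    obtain ⟨g, hg, hgl⟩ := exists_conformal_mconj_line_eq_abs (b / a)
    exact ⟨g, hg, Or.inl ⟨_, abs_nonneg _, hline ▸ hgl⟩⟩

/-- every line in span{I,J} is conjugate, by some conformal matrix, to
ℝ·(I+αJ) with α ≥ 0 or to ℝ·J, and these representatives are pairwise inequivalent
under conformal conjugation. -/
theorem stmt15 :
    (∀ ℓ : Submodule ℝ (Matrix (Fin 2) (Fin 2) ℝ),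
      ℓ ≤ Submodule.span ℝ {(1 : Matrix (Fin 2) (Fin 2) ℝ), Jm} →
      Module.finrank ℝ ℓ = 1 →
      ∃ g : Matrix (Fin 2) (Fin 2) ℝ, conformal g ∧
        ((∃ α : ℝ, 0 ≤ α ∧ mconj g (ℓ : Set (Matrix (Fin 2) (Fin 2) ℝ)) = line (1 + α • Jm)) ∨
          mconj g (ℓ : Set (Matrix (Fin 2) (Fin 2) ℝ)) = line Jm)) ∧
    (∀ α α' : ℝ, 0 ≤ α → 0 ≤ α' → α ≠ α' → ∀ g : Matrix (Fin 2) (Fin 2) ℝ, conformal g →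
      mconj g (line (1 + α • Jm)) ≠ line (1 + α' • Jm)) ∧
    (∀ α : ℝ, 0 ≤ α → ∀ g : Matrix (Fin 2) (Fin 2) ℝ, conformal g →
      mconj g (line (1 + α • Jm)) ≠ line Jm) := by
  refine ⟨fun ℓ hle hℓ => ?_, fun α α' hα hα' hne g hg h => ?_, fun α _ g hg h => ?_⟩
  · obtain ⟨v, hvℓ, hv0, hℓv⟩ := exists_coe_eq_line_of_finrank_eq_one hℓ
    rw [hℓv]
    exact exists_conformal_mconj_line (hle hvℓ) hv0
  · obtain ⟨ε, hε, hgl⟩ := hg.mconj_line_one_add_smul_Jm α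
    have hεα : ε * α = α' := line_one_add_smul_Jm_injective (hgl.symm.trans h)
    apply hne
    rw [← abs_of_nonneg hα, ← abs_of_nonneg hα', ← hεα, abs_mul, hε, one_mul]
  · obtain ⟨ε, -, hgl⟩ := hg.mconj_line_one_add_smul_Jm α
    exact line_one_add_smul_Jm_ne_line_Jm _ (hgl.symm.trans h)
end

section
/- A two-dimensional linear subspace P of the space of lower triangular 2×2 real matrices is closed under the commutator bracket [A,B] = AB − BA (i.e., is a Lie subalgebra) if and only if P contains the identity matrix I or P contains the matrix unit E₂₁ (the matrix with 1 in position (2,1) and 0 elsewhere). -/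
/-!
For lower triangular `A` and `B`, `[A, B] = det (φ A, φ B) • E₂₁`, where `φ = lieCoords` sends `A`
to `(A₂₁, A₁₁ - A₂₂)`.
So `P` is closed under the bracket iff `E₂₁ ∈ P` or this determinant vanishes on `P`, i.e. iff
`E₂₁ ∈ P` or `φ(P)` is not all of `K²`. On lower triangular matrices `φ` has kernel the scalars,
so by rank–nullity `φ(P) ≠ K²` exactly when `I ∈ P`.
-/

open Matrix Module

theorem Submodule.smul_mem_iff_eq_zero_or_mem {K V : Type*} [DivisionRing K] [AddCommGroup V]
    [Module K V] (P : Submodule K V) (c : K) (x : V) :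
    c • x ∈ P ↔ c = 0 ∨ x ∈ P := by
  by_cases hc : c = 0
  · simp [hc]
  · simp [hc, P.smul_mem_iff hc]

section Plane

variable {K V : Type*} [Field K] [AddCommGroup V] [Module K V] [FiniteDimensional K V]

theorem LinearMap.det_pair_eq_zero_of_ker_ne_bot (g : V →ₗ[K] Fin 2 → K)
    (hV : finrank K V ≤ 2) (hker : LinearMap.ker g ≠ ⊥) (x y : V) :
    (of ![g x, g y]).det = 0 := by
  by_contra hdet
  have hrange : finrank K (LinearMap.range g) ≤ 1 := by
    have := g.finrank_range_add_finrank_ker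
    have := Submodule.one_le_finrank_iff.mpr hker
    omega
  have hind : LinearIndependent K ![g x, g y] := linearIndependent_rows_of_det_ne_zero hdet
  have hspan : Submodule.span K (Set.range ![g x, g y]) ≤ LinearMap.range g := by
    rw [Submodule.span_le, Set.range_subset_iff]
    intro i
    fin_cases i <;> simp
  have := Submodule.finrank_mono hspan
  rw [finrank_span_eq_card hind, Fintype.card_fin] at this
  omega

theorem LinearMap.exists_det_pair_ne_zero (g : V →ₗ[K] Fin 2 → K)
    (hV : finrank K V = 2) (hker : LinearMap.ker g = ⊥) :
    ∃ x y, (of ![g x, g y]).det ≠ 0 := by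
  have hsurj : Function.Surjective g :=
    (LinearMap.injective_iff_surjective_of_finrank_eq_finrank (by simpa using hV)).mp
      (LinearMap.ker_eq_bot.mp hker)
  obtain ⟨x, hx⟩ := hsurj (Pi.single 0 1)
  obtain ⟨y, hy⟩ := hsurj (Pi.single 1 1)
  refine ⟨x, y, ?_⟩
  rw [hx, hy, det_fin_two]
  simp

theorem LinearMap.forall_det_pair_eq_zero_iff_ker_ne_bot (g : V →ₗ[K] Fin 2 → K)
    (hV : finrank K V = 2) :
    (∀ x y, (of ![g x, g y]).det = 0) ↔ LinearMap.ker g ≠ ⊥ := by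
  refine ⟨fun h hker => ?_, fun hker => g.det_pair_eq_zero_of_ker_ne_bot hV.le hker⟩
  obtain ⟨x, y, hxy⟩ := g.exists_det_pair_ne_zero hV hker
  exact hxy (h x y)

end Plane

section LowerTriangular

variable {R : Type*} [CommRing R]

def lieCoords : Matrix (Fin 2) (Fin 2) R →ₗ[R] Fin 2 → R where
  toFun A := ![A 1 0, A 0 0 - A 1 1]
  map_add' A B := by
    ext i
    fin_cases i <;> simp [add_sub_add_comm]
  map_smul' c A := by
    ext i
    fin_cases i <;> simp [mul_sub]

@[simp]
theorem lieCoords_apply (A : Matrix (Fin 2) (Fin 2) R) :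
    lieCoords A = ![A 1 0, A 0 0 - A 1 1] := rfl

theorem mul_sub_mul_eq_det_lieCoords_smul {A B : Matrix (Fin 2) (Fin 2) R}
    (hA : A 0 1 = 0) (hB : B 0 1 = 0) :
    A * B - B * A = (of ![lieCoords A, lieCoords B]).det • !![0, 0; 1, 0] := by
  rw [det_fin_two]
  ext i j
  fin_cases i <;> fin_cases j <;> simp [mul_apply, Fin.sum_univ_two, hA, hB] <;> ring

theorem eq_smul_one_of_lieCoords_eq_zero {A : Matrix (Fin 2) (Fin 2) R}
    (hA : A 0 1 = 0) (h : lieCoords A = 0) : A = A 0 0 • 1 := by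
  have h10 : A 1 0 = 0 := by simpa using congrFun h 0
  have h11 : A 0 0 - A 1 1 = 0 := by simpa using congrFun h 1
  ext i j
  fin_cases i <;> fin_cases j <;> simp [hA, h10, one_apply]
  linear_combination -h11

end LowerTriangular

section LowerTriangularSubspace

variable {K : Type*} [Field K] {P : Submodule K (Matrix (Fin 2) (Fin 2) K)}

theorem ker_lieCoords_comp_subtype_ne_bot_iff (hlow : ∀ A ∈ P, A 0 1 = 0) :
    LinearMap.ker (lieCoords ∘ₗ P.subtype) ≠ ⊥ ↔ (1 : Matrix (Fin 2) (Fin 2) K) ∈ P := by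
  constructor
  · intro hker
    obtain ⟨⟨A, hAP⟩, hA, hA0⟩ := Submodule.ne_bot_iff _ |>.mp hker
    have hscalar := eq_smul_one_of_lieCoords_eq_zero (hlow A hAP) hA
    have hA00 : A 0 0 ≠ 0 := by
      intro h
      rw [h, zero_smul] at hscalar
      exact hA0 (Subtype.ext hscalar)
    rw [hscalar] at hAP
    exact (P.smul_mem_iff hA00).mp hAP
  · intro h1
    rw [Submodule.ne_bot_iff]
    exact ⟨⟨1, h1⟩, by ext i; fin_cases i <;> simp, fun h => one_ne_zero (congrArg Subtype.val h)⟩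

theorem one_mem_iff_forall_det_lieCoords_eq_zero (hlow : ∀ A ∈ P, A 0 1 = 0)
    (hdim : finrank K P = 2) :
    (1 : Matrix (Fin 2) (Fin 2) K) ∈ P ↔
      ∀ A ∈ P, ∀ B ∈ P, (of ![lieCoords A, lieCoords B]).det = 0 := by
  rw [← ker_lieCoords_comp_subtype_ne_bot_iff hlow,
    ← (lieCoords ∘ₗ P.subtype).forall_det_pair_eq_zero_iff_ker_ne_bot hdim]
  simp

end LowerTriangularSubspace

/-- a 2-dimensional subspace of the lower triangular 2×2 real matrices is
closed under the commutator bracket iff it contains I or the matrix unit E₂₁. -/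
theorem stmt17 (P : Submodule ℝ (Matrix (Fin 2) (Fin 2) ℝ))
    (hlow : ∀ A ∈ P, A 0 1 = 0) (hdim : Module.finrank ℝ P = 2) :
    (∀ A ∈ P, ∀ B ∈ P, A * B - B * A ∈ P) ↔
      ((1 : Matrix (Fin 2) (Fin 2) ℝ) ∈ P ∨ (!![0, 0; 1, 0] : Matrix (Fin 2) (Fin 2) ℝ) ∈ P) := by
  have hbracket : ∀ A ∈ P, ∀ B ∈ P, A * B - B * A ∈ P ↔
      (of ![lieCoords A, lieCoords B]).det = 0 ∨ !![0, 0; 1, 0] ∈ P := fun A hA B hB => by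
    rw [mul_sub_mul_eq_det_lieCoords_smul (hlow A hA) (hlow B hB),
      Submodule.smul_mem_iff_eq_zero_or_mem]
  rw [one_mem_iff_forall_det_lieCoords_eq_zero hlow hdim]
  constructor
  · intro hclosed
    by_cases hE : (!![0, 0; 1, 0] : Matrix (Fin 2) (Fin 2) ℝ) ∈ P
    · exact Or.inr hE
    · exact Or.inl fun A hA B hB => ((hbracket A hA B hB).mp (hclosed A hA B hB)).resolve_right hE
  · rintro (hdet | hE) A hA B hB <;> rw [hbracket A hA B hB]
    · exact Or.inl (hdet A hA B hB)
    · exact Or.inr hE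
end
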